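/- arXiv:math/0305379 — 2 statements merged into one kernel-verified Lean document; each statement's English description precedes it below -/
import Mathlib

section
/- Let n ≥ 1 be an integer, let z_1,…,z_n be nonzero complex numbers, and let m = (m_1,…,m_n) ∈ ℕ^n with |m| = m_1+⋯+m_n. Assume genericity so that every elliptic Pochhammer symbol occurring in a denominator below is nonzero. Then [Δ(1/z)/Δ(q^{−m}/z)] · ∏_{j,k=1}^n (q^{−m_k} z_j/z_k)_{m_k} / (q^{1−m_k+m_j} z_j/z_k)_{m_k} = (−1)^{|m|} q^{−|m| − C(|m|,2)}, where 1/z = (1/z_1,…,1/z_n), q^{−m}/z = (q^{−m_1}/z_1,…,q^{−m_n}/z_n), and C(|m|,2) = |m|(|m|−1)/2. -/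
open Finset

/-- The theta function `θ(x) = ∏_{j≥0} (1 - pʲx)(1 - pʲ⁺¹/x)`. -/
noncomputable def theta (p x : ℂ) : ℂ := ∏' j : ℕ, ((1 - p ^ j * x) * (1 - p ^ (j + 1) / x))

/-- The elliptic Pochhammer symbol `(a)_k = θ(a)θ(aq)⋯θ(aq^{k-1})`. -/
noncomputable def epoch (p q a : ℂ) (k : ℕ) : ℂ := ∏ i ∈ Finset.range k, theta p (a * q ^ i)

/-- The elliptic Weyl denominator `Δ(z) = ∏_{j<k} z_j θ(z_k/z_j)`. -/
noncomputable def edelta (p : ℂ) {n : ℕ} (z : Fin n → ℂ) : ℂ :=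
  ∏ j : Fin n, ∏ k ∈ Finset.Ioi j, z j * theta p (z k / z j)

lemma multipliable_one_sub_geo {p : ℂ} (hp : ‖p‖ < 1) (c : ℂ) :
    Multipliable (fun j : ℕ => 1 - p ^ j * c) := by
  by_cases h : ∃ j, (1:ℂ) - p ^ j * c = 0
  · exact ⟨0, hasProd_zero_of_exists_eq_zero h⟩
  · push_neg at h
    refine Complex.multipliable_of_summable_log (f := fun j => 1 - p ^ j * c) ?_
    have hgeo : Summable (fun j : ℕ => 3/2 * (‖c‖ * ‖p‖ ^ j)) :=
      ((summable_geometric_of_lt_one (norm_nonneg p) hp).mul_left _).mul_left _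
    refine Summable.of_norm_bounded_eventually hgeo ?_
    rw [Nat.cofinite_eq_atTop]
    have h0 : Filter.Tendsto (fun j : ℕ => ‖p‖ ^ j * ‖c‖)
        Filter.atTop (nhds 0) := by
      simpa using (tendsto_pow_atTop_nhds_zero_of_lt_one (norm_nonneg p)
        hp).mul_const (‖c‖)
    filter_upwards [h0.eventually_le_const (by norm_num : (0:ℝ) < 1/2)] with j hj
    have hb : ‖-(p ^ j * c)‖ ≤ 1/2 := by
      simpa [norm_mul, norm_pow] using hj
    calc ‖Complex.log (1 - p ^ j * c)‖
        = ‖Complex.log (1 + -(p ^ j * c))‖ := by ring_nf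
      _ ≤ 3/2 * ‖-(p ^ j * c)‖ := Complex.norm_log_one_add_half_le_self hb
      _ = 3/2 * (‖c‖ * ‖p‖ ^ j) := by
          simp [norm_mul, norm_pow, mul_comm]

lemma theta_inv {p : ℂ} (hp : ‖p‖ < 1) {x : ℂ} (hx : x ≠ 0) :
    theta p x⁻¹ = -x⁻¹ * theta p x := by
  have key : ∀ y : ℂ, y ≠ 0 → theta p y =
      (1 - y) * ((∏' j : ℕ, (1 - p ^ (j+1) * y)) * (∏' j : ℕ, (1 - p ^ (j+1) * y⁻¹))) := by
    intro y hy
    have mA' : Multipliable fun j : ℕ => 1 - p ^ (j+1) * y :=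
      (multipliable_one_sub_geo hp (p * y)).congr fun j => by ring_nf
    have mB' : Multipliable fun j : ℕ => 1 - p ^ (j+1) * y⁻¹ :=
      (multipliable_one_sub_geo hp (p * y⁻¹)).congr fun j => by ring_nf
    have mA : Multipliable fun j : ℕ => 1 - p ^ j * y := multipliable_one_sub_geo hp y
    unfold theta
    rw [show (fun j : ℕ => ((1 - p ^ j * y) * (1 - p ^ (j+1) / y)))
        = fun j => (1 - p ^ j * y) * (1 - p ^ (j+1) * y⁻¹) by
      funext j; rw [div_eq_mul_inv]]
    rw [mA.tprod_mul mB', tprod_eq_zero_mul' (mA'.congr fun n => rfl)]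
    rw [pow_zero, one_mul]; ring
  have h1 := key x hx
  have h2 := key x⁻¹ (inv_ne_zero hx)
  rw [inv_inv] at h2
  rw [h1, h2]
  field_simp
  ring
open Finset


/-- Product of theta over an integer interval of exponents. -/
noncomputable def thP (p q w : ℂ) (a b : ℤ) : ℂ := ∏ e ∈ Finset.Ioc a b, theta p (q ^ e * w)

lemma epoch_eq_thP (p q : ℂ) (hq : q ≠ 0) (c : ℤ) (w : ℂ) (k : ℕ) :
    epoch p q (q ^ c * w) k = thP p q w (c - 1) (c - 1 + k) := by
  unfold epoch thP
  refine Finset.prod_nbij' (fun i => c + i) (fun e => (e - c).toNat) ?_ ?_ ?_ ?_ ?_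
  · intro i hi; simp only [Finset.mem_range] at hi; simp only [Finset.mem_Ioc]; omega
  · intro e he; simp only [Finset.mem_Ioc] at he; simp only [Finset.mem_range]; omega
  · intro i _; simp
  · intro e he; simp only [Finset.mem_Ioc] at he; simp; omega
  · intro i _
    congr 1
    rw [zpow_add₀ hq, zpow_natCast]
    ring

lemma thP_mul (p q w : ℂ) {a b c : ℤ} (hab : a ≤ b) (hbc : b ≤ c) :
    thP p q w a b * thP p q w b c = thP p q w a c := by
  unfold thP
  rw [← Finset.prod_union (by
      simp only [Finset.disjoint_left, Finset.mem_Ioc]; intro e h1 h2; omega),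
    Finset.Ioc_union_Ioc_eq_Ioc hab hbc]

lemma thP_single (p q w : ℂ) (t : ℤ) : thP p q w (t - 1) t = theta p (q ^ t * w) := by
  unfold thP
  rw [show Finset.Ioc (t - 1) t = {t} by ext e; simp only [Finset.mem_Ioc, Finset.mem_singleton]; omega,
    Finset.prod_singleton]

lemma thP_inv (p q : ℂ) (hp : ‖p‖ < 1) (hq : q ≠ 0) {w : ℂ} (hw : w ≠ 0) (a b : ℤ) :
    thP p q w⁻¹ a b = (∏ e ∈ Finset.Ioc a b, (-(q ^ e * w⁻¹))) * thP p q w (-b - 1) (-a - 1) := by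
  unfold thP
  rw [show ∏ e ∈ Finset.Ioc (-b-1) (-a-1), theta p (q ^ e * w)
      = ∏ e ∈ Finset.Ioc a b, theta p (q ^ (-e) * w) by
    refine (Finset.prod_nbij' (fun e => -e) (fun e => -e) ?_ ?_ ?_ ?_ ?_).symm <;>
      (intro e he <;> simp only [Finset.mem_Ioc] at *) <;> first | omega | rfl]
  rw [← Finset.prod_mul_distrib]
  refine Finset.prod_congr rfl fun e _ => ?_
  have h1 : q ^ e * w⁻¹ = (q ^ (-e) * w)⁻¹ := by
    rw [mul_inv, zpow_neg, inv_inv]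
  rw [h1, theta_inv hp (by
    exact mul_ne_zero (zpow_ne_zero _ hq) hw), ← h1]
lemma zpow_prod_sum {q : ℂ} (hq : q ≠ 0) {ι : Type*} (s : Finset ι) (f : ι → ℤ) :
    ∏ i ∈ s, q ^ f i = q ^ (∑ i ∈ s, f i) := by
  induction s using Finset.cons_induction with
  | empty => simp
  | cons a s ha ih => rw [Finset.prod_cons, Finset.sum_cons, ih, ← zpow_add₀ hq]

lemma diag_prod (q : ℂ) (hq : q ≠ 0) (b : ℕ) :
    ∏ e ∈ Finset.Ioc (-(b:ℤ) - 1) (-1), (-(q ^ e)) = (-1) ^ b * q ^ (-(((b+1).choose 2 : ℕ) : ℤ)) := by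
  induction b with
  | zero => norm_num
  | succ b ih =>
    have hsplit : Finset.Ioc (-(b:ℤ) - 2) (-1) = insert (-(b:ℤ) - 1) (Finset.Ioc (-(b:ℤ) - 1) (-1)) := by
      ext e; simp only [Finset.mem_Ioc, Finset.mem_insert]; omega
    have hb2 : (-((b:ℕ)+1:ℕ):ℤ) - 1 = -(b:ℤ) - 2 := by push_cast; ring
    rw [hb2, hsplit, Finset.prod_insert (by simp only [Finset.mem_Ioc]; omega), ih]
    have hch : (((b+1)+1).choose 2 : ℤ) = ((b:ℤ)+1) + ((b+1).choose 2 : ℕ) := by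
      rw [Nat.choose_succ_succ (b+1) 1, Nat.choose_one_right]; push_cast; ring
    rw [show (-((((b+1)+1).choose 2 : ℕ)):ℤ) = (-(b:ℤ)-1) + (-(((b+1).choose 2 : ℕ):ℤ)) by omega,
      zpow_add₀ hq]
    ring
lemma diag_term (p q : ℂ) (hp : ‖p‖ < 1) (hq : q ≠ 0) (b : ℕ)
    (hden : thP p q 1 0 (b:ℤ) ≠ 0) :
    thP p q 1 (-(b:ℤ) - 1) (-1) / thP p q 1 0 (b:ℤ)
      = (-1) ^ b * q ^ (-(((b+1).choose 2 : ℕ) : ℤ)) := by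
  have hinv := thP_inv p q hp hq (one_ne_zero (α := ℂ)) (-(b:ℤ) - 1) (-1)
  rw [inv_one, show -(-1:ℤ) - 1 = 0 by ring, show -(-(b:ℤ) - 1) - 1 = (b:ℤ) by ring] at hinv
  rw [hinv, mul_div_assoc, div_self hden, mul_one, ← diag_prod q hq b]
  exact Finset.prod_congr rfl fun e _ => by rw [mul_one]

lemma pair_eq (p q : ℂ) (hp : ‖p‖ < 1) (hq : q ≠ 0) {w : ℂ} (hw : w ≠ 0) (a b : ℕ)
    (hne : ∀ f : ℤ, -(b:ℤ) ≤ f → f ≤ (a:ℤ) → theta p (q ^ f * w) ≠ 0) :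
    (q ^ (a:ℤ) * theta p w / theta p (q ^ ((a:ℤ) - (b:ℤ)) * w)) *
      ((thP p q w⁻¹ (-(a:ℤ) - 1) (-1) / thP p q w⁻¹ ((b:ℤ) - (a:ℤ)) (b:ℤ)) *
        (thP p q w (-(b:ℤ) - 1) (-1) / thP p q w ((a:ℤ) - (b:ℤ)) (a:ℤ)))
    = q ^ (-((a:ℤ) * (b:ℤ))) := by
  have hinv1 := thP_inv p q hp hq hw (-(a:ℤ) - 1) (-1)
  rw [show -(-1:ℤ) - 1 = 0 by ring, show -(-(a:ℤ) - 1) - 1 = (a:ℤ) by ring] at hinv1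
  have hinv2 := thP_inv p q hp hq hw ((b:ℤ) - (a:ℤ)) (b:ℤ)
  rw [show -((b:ℤ)) - 1 = -(b:ℤ) - 1 by ring,
    show -((b:ℤ) - (a:ℤ)) - 1 = (a:ℤ) - (b:ℤ) - 1 by ring] at hinv2
  have hshift : (∏ e ∈ Finset.Ioc ((b:ℤ) - (a:ℤ)) (b:ℤ), (-(q ^ e * w⁻¹)))
      = (q ^ ((b:ℤ) + 1)) ^ a * ∏ e ∈ Finset.Ioc (-(a:ℤ) - 1) (-1), (-(q ^ e * w⁻¹)) := by
    rw [show Finset.Ioc ((b:ℤ) - (a:ℤ)) (b:ℤ)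
        = Finset.map ⟨fun e => e + ((b:ℤ) + 1), add_left_injective _⟩
            (Finset.Ioc (-(a:ℤ) - 1) (-1)) from by
      ext e
      simp only [Finset.mem_Ioc, Finset.mem_map, Function.Embedding.coeFn_mk]
      constructor
      · intro h; exact ⟨e - ((b:ℤ) + 1), by omega, by ring⟩
      · rintro ⟨x, hx, rfl⟩; omega]
    rw [Finset.prod_map]
    simp only [Function.Embedding.coeFn_mk]
    calc ∏ e ∈ Finset.Ioc (-(a:ℤ) - 1) (-1), (-(q ^ (e + ((b:ℤ) + 1)) * w⁻¹))
        = ∏ e ∈ Finset.Ioc (-(a:ℤ) - 1) (-1), (q ^ ((b:ℤ) + 1) * (-(q ^ e * w⁻¹))) :=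
          Finset.prod_congr rfl fun e _ => by rw [zpow_add₀ hq]; ring
      _ = (q ^ ((b:ℤ) + 1)) ^ a * ∏ e ∈ Finset.Ioc (-(a:ℤ) - 1) (-1), (-(q ^ e * w⁻¹)) := by
          rw [Finset.prod_mul_distrib, Finset.prod_const, Int.card_Ioc]
          congr 2
          omega
  have hE1 : thP p q w (-(b:ℤ) - 1) (-1) * (theta p (q ^ (0:ℤ) * w) * thP p q w 0 (a:ℤ))
      = thP p q w (-(b:ℤ) - 1) (a:ℤ) := by
    have h1 : theta p (q ^ (0:ℤ) * w) = thP p q w (-1) 0 := by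
      rw [← thP_single p q w 0]; norm_num
    rw [h1, thP_mul p q w (by omega) (by omega), thP_mul p q w (by omega) (by omega)]
  have hE2 : thP p q w (-(b:ℤ) - 1) ((a:ℤ) - (b:ℤ) - 1) *
        (theta p (q ^ ((a:ℤ) - (b:ℤ)) * w) * thP p q w ((a:ℤ) - (b:ℤ)) (a:ℤ))
      = thP p q w (-(b:ℤ) - 1) (a:ℤ) := by
    have h1 : theta p (q ^ ((a:ℤ) - (b:ℤ)) * w) = thP p q w ((a:ℤ) - (b:ℤ) - 1) ((a:ℤ) - (b:ℤ)) := by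
      rw [← thP_single p q w ((a:ℤ) - (b:ℤ))]
    rw [h1, thP_mul p q w (by omega) (by omega), thP_mul p q w (by omega) (by omega)]
  have hthP_ne : ∀ x y : ℤ, -(b:ℤ) - 1 ≤ x → y ≤ (a:ℤ) → thP p q w x y ≠ 0 := by
    intro x y hx hy
    unfold thP
    rw [Finset.prod_ne_zero_iff]
    intro e he
    rw [Finset.mem_Ioc] at he
    exact hne e (by omega) (by omega)
  have h0 : theta p (q ^ (0:ℤ) * w) ≠ 0 := hne 0 (by omega) (by omega)
  have hab : theta p (q ^ ((a:ℤ) - (b:ℤ)) * w) ≠ 0 := hne _ (by omega) (by omega)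
  have hSa : (∏ e ∈ Finset.Ioc (-(a:ℤ) - 1) (-1), (-(q ^ e * w⁻¹))) ≠ 0 := by
    rw [Finset.prod_ne_zero_iff]
    intro e _
    exact neg_ne_zero.mpr (mul_ne_zero (zpow_ne_zero _ hq) (inv_ne_zero hw))
  have hw0 : theta p w = theta p (q ^ (0:ℤ) * w) := by rw [zpow_zero, one_mul]
  have key : q ^ ((a:ℤ)) = q ^ (-((a:ℤ) * (b:ℤ))) * (q ^ ((b:ℤ) + 1)) ^ a := by
    rw [← zpow_natCast (q ^ ((b:ℤ) + 1)) a, ← zpow_mul, ← zpow_add₀ hq]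
    congr 1
    ring
  rw [hinv1, hinv2, hshift, hw0, key]
  have hQb : (q ^ ((b:ℤ) + 1)) ^ a ≠ 0 := pow_ne_zero _ (zpow_ne_zero _ hq)
  have hY2 : thP p q w (-(b:ℤ) - 1) ((a:ℤ) - (b:ℤ) - 1) ≠ 0 :=
    hthP_ne (-(b:ℤ) - 1) ((a:ℤ) - (b:ℤ) - 1) (by omega) (by omega)
  have hX2 : thP p q w ((a:ℤ) - (b:ℤ)) (a:ℤ) ≠ 0 :=
    hthP_ne ((a:ℤ) - (b:ℤ)) (a:ℤ) (by omega) (by omega)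
  rw [div_mul_div_comm, div_mul_div_comm, div_eq_iff
    (mul_ne_zero hab (mul_ne_zero (mul_ne_zero (mul_ne_zero hQb hSa) hY2) hX2))]
  linear_combination (q ^ (-((a:ℤ) * (b:ℤ))) * (q ^ ((b:ℤ) + 1)) ^ a *
      (∏ e ∈ Finset.Ioc (-(a:ℤ) - 1) (-1), (-(q ^ e * w⁻¹)))) * hE1 -
    (q ^ (-((a:ℤ) * (b:ℤ))) * (q ^ ((b:ℤ) + 1)) ^ a *
      (∏ e ∈ Finset.Ioc (-(a:ℤ) - 1) (-1), (-(q ^ e * w⁻¹)))) * hE2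
lemma double_split {M : Type*} [CommMonoid M] {n : ℕ} (F : Fin n → Fin n → M) :
    (∏ j, ∏ k, F j k) = (∏ k, F k k) * ∏ j, ∏ k ∈ Finset.Ioi j, (F j k * F k j) := by
  calc (∏ j, ∏ k, F j k)
      = ∏ j, (F j j * ∏ k ∈ Finset.univ.erase j, F j k) :=
        Finset.prod_congr rfl fun j _ => by
          rw [Finset.mul_prod_erase Finset.univ (F j) (Finset.mem_univ j)]
    _ = (∏ j, F j j) * ∏ j, ∏ k ∈ Finset.univ.erase j, F j k := Finset.prod_mul_distrib
    _ = (∏ k, F k k) * ∏ j, ∏ k ∈ Finset.Ioi j, (F j k * F k j) := by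
        have h := (Finset.prod_prod_Ioi_mul_eq_prod_prod_off_diag (fun x y => F y x)).symm
        simp only [Finset.compl_singleton] at h
        refine congrArg (fun t => (∏ k, F k k) * t) ?_
        convert h using 3 <;> congr!

lemma double_split_add {M : Type*} [AddCommMonoid M] {n : ℕ} (F : Fin n → Fin n → M) :
    (∑ j, ∑ k, F j k) = (∑ k, F k k) + ∑ j, ∑ k ∈ Finset.Ioi j, (F j k + F k j) := by
  calc (∑ j, ∑ k, F j k)
      = ∑ j, (F j j + ∑ k ∈ Finset.univ.erase j, F j k) :=
        Finset.sum_congr rfl fun j _ => by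
          rw [Finset.add_sum_erase Finset.univ (F j) (Finset.mem_univ j)]
    _ = (∑ j, F j j) + ∑ j, ∑ k ∈ Finset.univ.erase j, F j k := Finset.sum_add_distrib
    _ = (∑ k, F k k) + ∑ j, ∑ k ∈ Finset.Ioi j, (F j k + F k j) := by
        have h := (Finset.sum_sum_Ioi_add_eq_sum_sum_off_diag (fun x y => F y x)).symm
        simp only [Finset.compl_singleton] at h
        refine congrArg (fun t => (∑ k, F k k) + t) ?_
        convert h using 3 <;> congr!

lemma two_choose (t : ℕ) : 2 * ((t+1).choose 2) = t * (t+1) := by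
  induction t with
  | zero => rfl
  | succ t ih =>
    rw [Nat.choose_succ_succ (t+1) 1, Nat.choose_one_right, Nat.mul_add, ih]
    ring

lemma sum_choose_identity {n : ℕ} (m : Fin n → ℕ) :
    (∑ k, (m k + 1).choose 2) + (∑ j, ∑ k ∈ Finset.Ioi j, m j * m k)
      = ((∑ i, m i) + 1).choose 2 := by
  apply Nat.eq_of_mul_eq_mul_left (show 0 < 2 by norm_num)
  have hsq : (∑ i, m i) * (∑ i, m i)
      = (∑ k, m k * m k) + ∑ j, ∑ k ∈ Finset.Ioi j, (m j * m k + m k * m j) := by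
    rw [Finset.sum_mul_sum]
    exact double_split_add (fun j k => m j * m k)
  have hd : (∑ j, ∑ k ∈ Finset.Ioi j, (m j * m k + m k * m j))
      = 2 * ∑ j, ∑ k ∈ Finset.Ioi j, m j * m k := by
    rw [Finset.mul_sum]
    refine Finset.sum_congr rfl fun j _ => ?_
    rw [Finset.mul_sum]
    exact Finset.sum_congr rfl fun k _ => by rw [mul_comm (m k) (m j)]; ring
  have h1 : 2 * (∑ k, (m k + 1).choose 2) = (∑ k, m k * m k) + ∑ k, m k := by
    rw [Finset.mul_sum, ← Finset.sum_add_distrib]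
    exact Finset.sum_congr rfl fun k _ => by rw [two_choose (m k)]; ring
  rw [Nat.mul_add, h1, two_choose (∑ i, m i)]
  have h3 : (∑ i, m i) * ((∑ i, m i) + 1) = (∑ i, m i) * (∑ i, m i) + ∑ i, m i := by ring
  rw [h3, hsq, hd]
  ring
/-- The identity equivalent to equation (3.8) of the author's earlier paper,
used in the derivation of Corollary 4. -/
theorem edelta_shift_identity (p q : ℂ) (hp : ‖p‖ < 1) (hq : q ≠ 0)
    (n : ℕ) (hn : 1 ≤ n) (z : Fin n → ℂ) (hz : ∀ k, z k ≠ 0) (m : Fin n → ℕ)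
    -- genericity: every elliptic Pochhammer symbol occurring in a denominator is nonzero
    (hΔ : edelta p (fun i => q ^ (-(m i : ℤ)) / z i) ≠ 0)
    (hden : ∀ j k : Fin n,
      epoch p q (q ^ (1 - (m k : ℤ) + m j) * z j / z k) (m k) ≠ 0) :
    (edelta p (fun i => 1 / z i) / edelta p (fun i => q ^ (-(m i : ℤ)) / z i)) *
      ∏ j, ∏ k, epoch p q (q ^ (-(m k : ℤ)) * z j / z k) (m k) /
        epoch p q (q ^ (1 - (m k : ℤ) + m j) * z j / z k) (m k)
    = (-1) ^ (∑ i, m i) * q ^ (-((∑ i, m i : ℤ) + (∑ i, m i).choose 2)) := by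
  classical
  have hW : ∀ j k : Fin n, z j / z k ≠ 0 := fun j k => div_ne_zero (hz j) (hz k)
  -- epochs as thP
  have hEp1 : ∀ j k : Fin n, epoch p q (q ^ (-(m k : ℤ)) * z j / z k) (m k)
      = thP p q (z j / z k) (-(m k : ℤ) - 1) (-1) := by
    intro j k
    rw [mul_div_assoc, epoch_eq_thP p q hq (-(m k : ℤ)) (z j / z k) (m k),
      show -(m k : ℤ) - 1 + (m k : ℕ) = (-1 : ℤ) by push_cast; ring]
  have hEp2 : ∀ j k : Fin n, epoch p q (q ^ (1 - (m k : ℤ) + m j) * z j / z k) (m k)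
      = thP p q (z j / z k) ((m j : ℤ) - (m k : ℤ)) (m j : ℤ) := by
    intro j k
    rw [mul_div_assoc, epoch_eq_thP p q hq (1 - (m k : ℤ) + m j) (z j / z k) (m k),
      show (1 - (m k : ℤ) + m j) - 1 = (m j : ℤ) - (m k : ℤ) by ring,
      show (m j : ℤ) - (m k : ℤ) + (m k : ℕ) = ((m j : ℕ) : ℤ) by push_cast; ring]
  have hden' : ∀ j k : Fin n, thP p q (z j / z k) ((m j : ℤ) - (m k : ℤ)) (m j : ℤ) ≠ 0 :=
    fun j k => hEp2 j k ▸ hden j k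
  -- the theta argument in edelta (q^{-m}/z)
  have harg : ∀ j k : Fin n, (q ^ (-(m k : ℤ)) / z k) / (q ^ (-(m j : ℤ)) / z j)
      = q ^ ((m j : ℤ) - (m k : ℤ)) * (z j / z k) := by
    intro j k
    rw [zpow_sub₀ hq, zpow_neg, zpow_neg]
    field_simp
  have hΔfac : ∀ j : Fin n, ∀ k ∈ Finset.Ioi j,
      theta p (q ^ ((m j : ℤ) - (m k : ℤ)) * (z j / z k)) ≠ 0 := by
    intro j k hk
    have hΔ' := hΔ
    unfold edelta at hΔ'
    rw [Finset.prod_ne_zero_iff] at hΔ'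
    have h1 := hΔ' j (Finset.mem_univ j)
    rw [Finset.prod_ne_zero_iff] at h1
    have h2 := h1 k hk
    simp only at h2
    rw [harg j k] at h2
    exact fun h => h2 (by rw [h, mul_zero])
  -- nonvanishing of all theta factors in the window
  have hne : ∀ j k : Fin n, k ∈ Finset.Ioi j → ∀ f : ℤ, -(m k : ℤ) ≤ f → f ≤ (m j : ℤ) →
      theta p (q ^ f * (z j / z k)) ≠ 0 := by
    intro j k hk f hf1 hf2
    rcases lt_trichotomy f ((m j : ℤ) - (m k : ℤ)) with h | h | h
    · have hkj := hden' k j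
      unfold thP at hkj
      rw [Finset.prod_ne_zero_iff] at hkj
      have h2 := hkj (-f) (by rw [Finset.mem_Ioc]; omega)
      have h3 : (q ^ (-f) * (z k / z j)) = (q ^ f * (z j / z k))⁻¹ := by
        rw [mul_inv, ← zpow_neg, inv_div]
      rw [h3, theta_inv hp (mul_ne_zero (zpow_ne_zero _ hq) (hW j k))] at h2
      intro h4
      rw [h4, mul_zero] at h2
      exact h2 rfl
    · rw [h]; exact hΔfac j k hk
    · have hjk := hden' j k
      unfold thP at hjk
      rw [Finset.prod_ne_zero_iff] at hjk
      exact hjk f (by rw [Finset.mem_Ioc]; omega)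
  -- the Weyl-denominator ratio
  have hδ : edelta p (fun i => 1 / z i) / edelta p (fun i => q ^ (-(m i : ℤ)) / z i)
      = ∏ j, ∏ k ∈ Finset.Ioi j, (q ^ ((m j : ℤ)) * theta p (z j / z k) /
          theta p (q ^ ((m j : ℤ) - (m k : ℤ)) * (z j / z k))) := by
    unfold edelta
    rw [← Finset.prod_div_distrib]
    refine Finset.prod_congr rfl fun j _ => ?_
    rw [← Finset.prod_div_distrib]
    refine Finset.prod_congr rfl fun k hk => ?_
    simp only
    rw [show (1 / z k) / (1 / z j) = z j / z k by
        rw [one_div, one_div, inv_div_inv], harg j k]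
    have hT := hΔfac j k hk
    field_simp
    rw [mul_assoc (theta p (z j / z k)), ← zpow_add₀ hq, neg_add_cancel, zpow_zero, mul_one,
      mul_div_mul_left _ _ (hz j)]
  -- the double product of epoch-ratios
  have hFF : (∏ j, ∏ k, epoch p q (q ^ (-(m k : ℤ)) * z j / z k) (m k) /
        epoch p q (q ^ (1 - (m k : ℤ) + m j) * z j / z k) (m k))
      = (∏ k, ((-1) ^ (m k) * q ^ (-(((m k + 1).choose 2 : ℕ) : ℤ)))) *
        ∏ j, ∏ k ∈ Finset.Ioi j,
          ((thP p q (z j / z k) (-(m k : ℤ) - 1) (-1) /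
              thP p q (z j / z k) ((m j : ℤ) - (m k : ℤ)) (m j : ℤ)) *
            (thP p q (z k / z j) (-(m j : ℤ) - 1) (-1) /
              thP p q (z k / z j) ((m k : ℤ) - (m j : ℤ)) (m k : ℤ))) := by
    rw [show (∏ j, ∏ k, epoch p q (q ^ (-(m k : ℤ)) * z j / z k) (m k) /
          epoch p q (q ^ (1 - (m k : ℤ) + m j) * z j / z k) (m k))
        = ∏ j, ∏ k, (thP p q (z j / z k) (-(m k : ℤ) - 1) (-1) /
            thP p q (z j / z k) ((m j : ℤ) - (m k : ℤ)) (m j : ℤ)) from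
      Finset.prod_congr rfl fun j _ => Finset.prod_congr rfl fun k _ => by
        rw [hEp1 j k, hEp2 j k]]
    rw [double_split (fun j k => thP p q (z j / z k) (-(m k : ℤ) - 1) (-1) /
        thP p q (z j / z k) ((m j : ℤ) - (m k : ℤ)) (m j : ℤ))]
    congr 1
    refine Finset.prod_congr rfl fun k _ => ?_
    have hzz : z k / z k = 1 := div_self (hz k)
    have hdd : thP p q 1 0 ((m k : ℕ) : ℤ) ≠ 0 := by
      have := hden' k k
      rwa [hzz, sub_self] at this
    rw [hzz, sub_self]
    exact diag_term p q hp hq (m k) hdd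
  rw [hδ, hFF, mul_left_comm, ← Finset.prod_mul_distrib]
  rw [show (∏ j, ((∏ k ∈ Finset.Ioi j, (q ^ ((m j : ℤ)) * theta p (z j / z k) /
          theta p (q ^ ((m j : ℤ) - (m k : ℤ)) * (z j / z k)))) *
        ∏ k ∈ Finset.Ioi j,
          ((thP p q (z j / z k) (-(m k : ℤ) - 1) (-1) /
              thP p q (z j / z k) ((m j : ℤ) - (m k : ℤ)) (m j : ℤ)) *
            (thP p q (z k / z j) (-(m j : ℤ) - 1) (-1) /
              thP p q (z k / z j) ((m k : ℤ) - (m j : ℤ)) (m k : ℤ)))))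
      = ∏ j, ∏ k ∈ Finset.Ioi j, q ^ (-((m j : ℤ) * (m k : ℤ))) from
    Finset.prod_congr rfl fun j _ => by
      rw [← Finset.prod_mul_distrib]
      refine Finset.prod_congr rfl fun k hk => ?_
      have hinv : z k / z j = (z j / z k)⁻¹ := by rw [inv_div]
      rw [hinv, mul_comm (thP p q (z j / z k) (-(m k : ℤ) - 1) (-1) /
          thP p q (z j / z k) ((m j : ℤ) - (m k : ℤ)) (m j : ℤ))]
      exact pair_eq p q hp hq (hW j k) (m j) (m k) (hne j k hk)]
  -- scalar collection
  rw [Finset.prod_mul_distrib, Finset.prod_pow_eq_pow_sum]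
  rw [show (∏ j, ∏ k ∈ Finset.Ioi j, q ^ (-((m j : ℤ) * (m k : ℤ))))
      = q ^ (∑ j, ∑ k ∈ Finset.Ioi j, -((m j : ℤ) * (m k : ℤ))) from by
    rw [← zpow_prod_sum hq]
    exact Finset.prod_congr rfl fun j _ => zpow_prod_sum hq _ _]
  rw [zpow_prod_sum hq, mul_assoc, ← zpow_add₀ hq]
  congr 1
  -- exponent identity
  have h := sum_choose_identity m
  rw [Nat.choose_succ_succ, Nat.choose_one_right] at h
  have h3 := congrArg (Nat.cast : ℕ → ℤ) h
  push_cast at h3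
  have e1 : (∑ k, -(((m k + 1).choose 2 : ℕ) : ℤ)) = -(∑ k, (((m k + 1).choose 2 : ℕ) : ℤ)) := by
    rw [← Finset.sum_neg_distrib]
  have e2 : (∑ j, ∑ k ∈ Finset.Ioi j, -((m j : ℤ) * (m k : ℤ)))
      = -(∑ j, ∑ k ∈ Finset.Ioi j, ((m j : ℤ) * (m k : ℤ))) := by
    rw [← Finset.sum_neg_distrib]
    exact Finset.sum_congr rfl fun j _ => by rw [← Finset.sum_neg_distrib]
  rw [e1, e2]
  push_cast
  congr 1
  linarith [h3]
end

section
/- Let n ≥ 1 be an integer, let z_1,…,z_{n+1} be nonzero complex numbers, let y ∈ ℕ^n and s ∈ ℕ, and write z̃ = (z_1,…,z_n) and (y,s) ∈ ℕ^{n+1}. Assume genericity so that every theta function or elliptic Pochhammer symbol occurring in a denominator below is nonzero. Then [Δ(z q^{(y,s)})/Δ(z)] · ∏_{j=1}^{n+1} 1/(q z_{n+1}/z_j)_s = [1/(q)_s] · [Δ(z̃ q^y)/Δ(z̃)] · ∏_{j=1}^n (z_j q^{1−s}/z_{n+1})_{y_j} / [(z_{n+1}/z_j)_s · (z_j q^{−s}/z_{n+1})_{y_j}].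 -/
open Finset

lemma norm_prod_one_add_sub_one_le {β : Type*} (t : Finset β) (g : β → ℂ) :
    ‖∏ i ∈ t, (1 + g i) - 1‖ ≤ ∏ i ∈ t, (1 + ‖g i‖) - 1 := by
  classical
  induction t using Finset.induction_on with
  | empty => simp
  | insert a t' ha ih =>
    rw [Finset.prod_insert ha, Finset.prod_insert ha]
    have h1 : (1 + g a) * ∏ i ∈ t', (1 + g i) - 1
        = (1 + g a) * (∏ i ∈ t', (1 + g i) - 1) + g a := by ring
    rw [h1]
    have hn : ‖∏ i ∈ t', (1 + g i) - 1‖ ≥ 0 := norm_nonneg _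
    calc ‖(1 + g a) * (∏ i ∈ t', (1 + g i) - 1) + g a‖
        ≤ ‖(1 + g a) * (∏ i ∈ t', (1 + g i) - 1)‖ + ‖g a‖ := norm_add_le _ _
      _ = ‖1 + g a‖ * ‖∏ i ∈ t', (1 + g i) - 1‖ + ‖g a‖ := by rw [norm_mul]
      _ ≤ (1 + ‖g a‖) * (∏ i ∈ t', (1 + ‖g i‖) - 1) + ‖g a‖ := by
          have hb : ‖(1 : ℂ) + g a‖ ≤ 1 + ‖g a‖ := (norm_add_le _ _).trans (by simp)
          have := mul_le_mul hb ih hn (by positivity)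
          linarith
      _ = (1 + ‖g a‖) * ∏ i ∈ t', (1 + ‖g i‖) - 1 := by ring

lemma prod_one_add_le_exp {β : Type*} (t : Finset β) (g : β → ℂ) :
    ∏ i ∈ t, (1 + ‖g i‖) ≤ Real.exp (∑ i ∈ t, ‖g i‖) := by
  rw [Real.exp_sum]
  exact Finset.prod_le_prod (fun i _ => by positivity)
    (fun i _ => by simpa [add_comm] using Real.add_one_le_exp ‖g i‖)

lemma multipliable_one_add {β : Type*} (g : β → ℂ) (hg : Summable fun i => ‖g i‖) :
    Multipliable fun i => 1 + g i := by
  classical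
  set u : Finset β → ℂ := fun t => ∏ i ∈ t, (1 + g i) with hu
  suffices h : CauchySeq u by
    obtain ⟨x, hx⟩ := cauchySeq_tendsto_of_complete h
    exact ⟨x, hx⟩
  set C : ℝ := Real.exp (∑' i, ‖g i‖) with hC
  have hC1 : 1 ≤ C := Real.one_le_exp (tsum_nonneg fun i => norm_nonneg _)
  have hCb : ∀ t : Finset β, ‖u t‖ ≤ C := by
    intro t
    calc ‖u t‖ ≤ ∏ i ∈ t, ‖1 + g i‖ := norm_prod_le _ _
      _ ≤ ∏ i ∈ t, (1 + ‖g i‖) := Finset.prod_le_prod (fun i _ => norm_nonneg _)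
          (fun i _ => (norm_add_le _ _).trans (by simp))
      _ ≤ Real.exp (∑ i ∈ t, ‖g i‖) := prod_one_add_le_exp t g
      _ ≤ C := Real.exp_le_exp.2 (Summable.sum_le_tsum t (fun i _ => norm_nonneg _) hg)
  rw [Metric.cauchySeq_iff']
  intro ε hε
  set δ : ℝ := Real.log (1 + ε / C) with hδ
  have hδ0 : 0 < δ := Real.log_pos (by have : 0 < ε / C := div_pos hε (by linarith); linarith)
  obtain ⟨N, hN⟩ := summable_iff_vanishing.mp hg (Set.Iio δ) (Iio_mem_nhds hδ0)
  refine ⟨N, fun t ht => ?_⟩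
  have hsub : N ⊆ t := ht
  have hsplit : u t = u N * ∏ i ∈ t \ N, (1 + g i) := by
    rw [hu]
    simp only
    rw [← Finset.prod_sdiff hsub]
    ring
  have hdisj : Disjoint (t \ N) N := Finset.sdiff_disjoint
  have hsum : ∑ i ∈ t \ N, ‖g i‖ < δ := hN _ hdisj
  have hb : ‖∏ i ∈ t \ N, (1 + g i) - 1‖ ≤ Real.exp (∑ i ∈ t \ N, ‖g i‖) - 1 := by
    have := _root_.norm_prod_one_add_sub_one_le (t \ N) g
    have := prod_one_add_le_exp (t \ N) g
    linarith
  rw [dist_eq_norm, hsplit]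
  have : u N * ∏ i ∈ t \ N, (1 + g i) - u N = u N * (∏ i ∈ t \ N, (1 + g i) - 1) := by ring
  rw [this, norm_mul]
  have hX : ‖∏ i ∈ t \ N, (1 + g i) - 1‖ < Real.exp δ - 1 := by
    have := Real.exp_lt_exp.2 hsum
    linarith
  have hle : ‖u N‖ * ‖∏ i ∈ t \ N, (1 + g i) - 1‖ ≤ C * ‖∏ i ∈ t \ N, (1 + g i) - 1‖ :=
    mul_le_mul_of_nonneg_right (hCb N) (norm_nonneg _)
  have hlt : C * ‖∏ i ∈ t \ N, (1 + g i) - 1‖ < C * (Real.exp δ - 1) :=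
    mul_lt_mul_of_pos_left hX (by linarith)
  have heq : C * (Real.exp δ - 1) = ε := by
    rw [hδ, Real.exp_log (by positivity)]
    field_simp
    ring
  linarith

lemma multipliable_geom {p : ℂ} (hp : ‖p‖ < 1) (c : ℂ) :
    Multipliable fun j : ℕ => 1 - p ^ j * c := by
  have h := multipliable_one_add (fun j : ℕ => -(p ^ j * c)) ?_
  · simpa [sub_eq_add_neg] using h
  · have hs : Summable fun j : ℕ => ‖p‖ ^ j := summable_geometric_of_lt_one
      (norm_nonneg p) hp
    have := hs.mul_right ‖c‖
    apply this.congr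
    intro j
    simp [norm_mul, norm_pow, mul_comm]

lemma multipliable_geom' {p : ℂ} (hp : ‖p‖ < 1) (c : ℂ) :
    Multipliable fun j : ℕ => 1 - p ^ (j + 1) * c := by
  have := multipliable_geom hp (p * c)
  apply this.congr
  intro j
  ring_nf

/-- tail product -/
noncomputable def ttail (p c : ℂ) : ℂ := ∏' j : ℕ, (1 - p ^ (j + 1) * c)

lemma theta_eq {p : ℂ} (hp : ‖p‖ < 1) (x : ℂ) :
    theta p x = (1 - x) * ttail p x * ttail p x⁻¹ := by
  unfold theta ttail
  have h1 : Multipliable fun j : ℕ => 1 - p ^ j * x := multipliable_geom hp x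
  have h2 : Multipliable fun j : ℕ => 1 - p ^ (j + 1) * x⁻¹ := multipliable_geom' hp x⁻¹
  calc ∏' j : ℕ, ((1 - p ^ j * x) * (1 - p ^ (j + 1) / x))
      = (∏' j : ℕ, (1 - p ^ j * x)) * ∏' j : ℕ, (1 - p ^ (j + 1) * x⁻¹) := by
        rw [← Multipliable.tprod_mul h1 h2]
        exact tprod_congr fun j => by rw [div_eq_mul_inv]
    _ = (1 - x) * (∏' j : ℕ, (1 - p ^ (j + 1) * x)) * ∏' j : ℕ, (1 - p ^ (j + 1) * x⁻¹) := by
        have h3 : (∏' j : ℕ, (1 - p ^ j * x)) = (1 - x) * ∏' j : ℕ, (1 - p ^ (j + 1) * x) := by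
          simpa using tprod_eq_zero_mul' (f := fun j : ℕ => 1 - p ^ j * x)
            (multipliable_geom' hp x)
        rw [h3]

lemma epoch_telescope (p q b : ℂ) (y : ℕ) :
    theta p b * epoch p q (b * q) y = epoch p q b y * theta p (b * q ^ y) := by
  induction y with
  | zero => simp [epoch]
  | succ m ih =>
    simp only [epoch, Finset.prod_range_succ] at ih ⊢
    have h1 : b * q * q ^ m = b * q ^ (m + 1) := by ring
    rw [h1]
    linear_combination theta p (b * q ^ (m + 1)) * ih

lemma core (p q a : ℂ) (hp : ‖p‖ < 1) (hq : q ≠ 0) (ha : a ≠ 0) (s y : ℕ) :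
    (q : ℂ) ^ (y : ℕ) * theta p (a * q ^ ((s : ℤ) - (y : ℤ))) * epoch p q a s *
        epoch p q (q ^ (-(s : ℤ)) / a) y
      = theta p a * epoch p q (q * a) s * epoch p q (q ^ (1 - (s : ℤ)) / a) y := by
  have hqs : (q : ℂ) ^ (s : ℤ) ≠ 0 := zpow_ne_zero _ hq
  have hqsy : (q : ℂ) ^ ((s : ℤ) - (y : ℤ)) ≠ 0 := zpow_ne_zero _ hq
  have hb : (q : ℂ) ^ (-(s : ℤ)) / a = (a * q ^ (s : ℤ))⁻¹ := by
    rw [zpow_neg, mul_inv, div_eq_mul_inv, mul_comm]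
  have hbq : ((a * q ^ (s : ℤ))⁻¹ * q ^ (y : ℕ)) = (a * q ^ ((s : ℤ) - (y : ℤ)))⁻¹ := by
    rw [mul_inv, mul_inv, zpow_sub₀ hq, ← zpow_natCast q y]
    field_simp
  have hbq1 : (a * q ^ (s : ℤ))⁻¹ * q = q ^ (1 - (s : ℤ)) / a := by
    rw [zpow_sub₀ hq, zpow_one]
    field_simp
  have ta : theta p a * epoch p q (a * q) s = epoch p q a s * theta p (a * q ^ (s : ℕ)) :=
    epoch_telescope p q a s
  have tb := epoch_telescope p q ((a * q ^ (s : ℤ))⁻¹) y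
  rw [hbq1, hbq, theta_inv hp (mul_ne_zero ha hqs), theta_inv hp (mul_ne_zero ha hqsy)] at tb
  have hqq : (q : ℂ) ^ (y : ℕ) * q ^ ((s : ℤ) - (y : ℤ)) = q ^ (s : ℤ) := by
    rw [← zpow_natCast q y, ← zpow_add₀ hq]
    congr 1
    ring
  have hmc : epoch p q (q * a) s = epoch p q (a * q) s := by rw [mul_comm]
  have hqsn : (q : ℂ) ^ (s : ℕ) = q ^ (s : ℤ) := by rw [zpow_natCast]
  rw [hmc, hb]
  rw [hqsn] at ta
  field_simp at tb
  rw [one_div] at tb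
  set θa := theta p a
  set θs := theta p (a * q ^ (s:ℤ))
  set θsy := theta p (a * q ^ ((s:ℤ) - (y:ℤ)))
  set E1 := epoch p q (q ^ (1 - (s:ℤ)) / a) y
  set Eb := epoch p q ((a * q ^ (s:ℤ))⁻¹) y
  set Pa := epoch p q a s
  set Paq := epoch p q (a * q) s
  apply mul_right_cancel₀ (mul_ne_zero ha hqsy)
  linear_combination (-(E1 * (a * q ^ ((s:ℤ) - (y:ℤ))))) * ta + (Pa * a) * tb +
    (Pa * Eb * θsy * a) * hqq

lemma Ioi_last_eq (n : ℕ) : Finset.Ioi (Fin.last n) = ∅ := by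
  ext k
  simp [Fin.lt_iff_val_lt_val, Fin.le_last]
  exact Fin.le_last k

lemma Ioi_castSucc_eq {n : ℕ} (i : Fin n) :
    Finset.Ioi (i.castSucc : Fin (n + 1)) =
      insert (Fin.last n) ((Finset.Ioi i).map Fin.castSuccEmb) := by
  ext k
  simp only [Finset.mem_Ioi, Finset.mem_insert, Finset.mem_map]
  constructor
  · intro hk
    rcases Fin.eq_castSucc_or_eq_last k with ⟨j, rfl⟩ | rfl
    · right
      exact ⟨j, by simpa [Fin.castSucc_lt_castSucc_iff] using hk, rfl⟩
    · left; rfl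
  · rintro (rfl | ⟨j, hj, rfl⟩)
    · exact Fin.castSucc_lt_last i
    · simpa [Fin.castSucc_lt_castSucc_iff] using hj

lemma prod_Ioi_castSucc {M : Type*} [CommMonoid M] {n : ℕ} (i : Fin n) (F : Fin (n + 1) → M) :
    ∏ k ∈ Finset.Ioi (i.castSucc : Fin (n + 1)), F k =
      F (Fin.last n) * ∏ k ∈ Finset.Ioi i, F k.castSucc := by
  rw [Ioi_castSucc_eq, Finset.prod_insert, Finset.prod_map]
  · rfl
  · simp only [Finset.mem_map]
    rintro ⟨j, _, hj⟩
    exact (Fin.castSucc_lt_last j).ne hj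

lemma edelta_succ (p : ℂ) {n : ℕ} (z : Fin (n + 1) → ℂ) :
    edelta p z = edelta p (fun i : Fin n => z i.castSucc) *
      ∏ j : Fin n, (z j.castSucc * theta p (z (Fin.last n) / z j.castSucc)) := by
  unfold edelta
  rw [Fin.prod_univ_castSucc, Ioi_last_eq, Finset.prod_empty, mul_one]
  have h1 : ∀ i : Fin n,
      ∏ k ∈ Finset.Ioi (i.castSucc : Fin (n + 1)), (z i.castSucc * theta p (z k / z i.castSucc))
      = (z i.castSucc * theta p (z (Fin.last n) / z i.castSucc)) *
        ∏ k ∈ Finset.Ioi i, (z i.castSucc * theta p (z k.castSucc / z i.castSucc)) :=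
    fun i => prod_Ioi_castSucc i _
  rw [Finset.prod_congr rfl (fun i _ => h1 i), Finset.prod_mul_distrib]
  ring

lemma aux_div (w L c : ℂ) (hw : w ≠ 0) (hL : L ≠ 0) : w * c / L = c / (L / w) := by
  field_simp

lemma term_identity (p q w L : ℂ) (hp : ‖p‖ < 1) (hq : q ≠ 0)
    (hw : w ≠ 0) (hL : L ≠ 0) (s y : ℕ)
    (h1 : theta p (L / w) ≠ 0) (h2 : epoch p q (q * L / w) s ≠ 0)
    (h3 : epoch p q (L / w) s ≠ 0) (h4 : epoch p q (w * q ^ (-(s : ℤ)) / L) y ≠ 0) :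
    (w * q ^ y * theta p (L * q ^ s / (w * q ^ y))) / (w * theta p (L / w)) *
        (1 / epoch p q (q * L / w) s)
      = epoch p q (w * q ^ (1 - (s : ℤ)) / L) y /
          (epoch p q (L / w) s * epoch p q (w * q ^ (-(s : ℤ)) / L) y) := by
  set a : ℂ := L / w with hadef
  have ha : a ≠ 0 := div_ne_zero hL hw
  have e1 : L * q ^ s / (w * q ^ y) = a * q ^ ((s : ℤ) - (y : ℤ)) := by
    rw [hadef, zpow_sub₀ hq, zpow_natCast, zpow_natCast]
    field_simp
  have e2 : q * L / w = q * a := by rw [hadef, mul_div_assoc]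
  have e3 : w * q ^ (1 - (s : ℤ)) / L = q ^ (1 - (s : ℤ)) / a :=
    hadef ▸ aux_div w L _ hw hL
  have e4 : w * q ^ (-(s : ℤ)) / L = q ^ (-(s : ℤ)) / a :=
    hadef ▸ aux_div w L _ hw hL
  rw [e1, e2, e3, e4]
  rw [e2] at h2
  rw [e4] at h4
  have hc := core p q a hp hq ha s y
  rw [div_mul_div_comm, mul_one]
  rw [div_eq_div_iff (mul_ne_zero (mul_ne_zero hw h1) h2) (mul_ne_zero h3 h4)]
  linear_combination w * hc

/-- The rewriting of part of the summand at the start of the inductive proof of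
Theorem 1 of the paper. -/
theorem summand_rewriting (p q : ℂ) (hp : ‖p‖ < 1) (hq : q ≠ 0)
    (n : ℕ) (hn : 1 ≤ n) (z : Fin (n + 1) → ℂ) (hz : ∀ k, z k ≠ 0)
    (y : Fin n → ℕ) (s : ℕ)
    -- genericity: every theta function or elliptic Pochhammer symbol occurring
    -- in a denominator is nonzero
    (hΔz : edelta p z ≠ 0)
    (hΔz' : edelta p (fun i : Fin n => z i.castSucc) ≠ 0)
    (hqs : epoch p q q s ≠ 0)
    (hd1 : ∀ j : Fin (n + 1), epoch p q (q * z (Fin.last n) / z j) s ≠ 0)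
    (hd2 : ∀ j : Fin n, epoch p q (z (Fin.last n) / z j.castSucc) s ≠ 0)
    (hd3 : ∀ j : Fin n,
      epoch p q (z j.castSucc * q ^ (-(s : ℤ)) / z (Fin.last n)) (y j) ≠ 0) :
    (edelta p (fun i => z i * q ^ ((Fin.snoc y s : Fin (n + 1) → ℕ) i)) / edelta p z) *
      ∏ j : Fin (n + 1), 1 / epoch p q (q * z (Fin.last n) / z j) s
    = 1 / epoch p q q s *
        (edelta p (fun i : Fin n => z i.castSucc * q ^ y i) /
          edelta p (fun i : Fin n => z i.castSucc)) *
        ∏ j : Fin n,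
          epoch p q (z j.castSucc * q ^ (1 - (s : ℤ)) / z (Fin.last n)) (y j) /
            (epoch p q (z (Fin.last n) / z j.castSucc) s *
              epoch p q (z j.castSucc * q ^ (-(s : ℤ)) / z (Fin.last n)) (y j)) := by
  have hL0 : z (Fin.last n) ≠ 0 := hz _
  -- numerator split
  have hnum : edelta p (fun i => z i * q ^ ((Fin.snoc y s : Fin (n + 1) → ℕ) i))
      = edelta p (fun i : Fin n => z i.castSucc * q ^ y i) *
        ∏ j : Fin n, (z j.castSucc * q ^ y j *
          theta p (z (Fin.last n) * q ^ s / (z j.castSucc * q ^ y j))) := by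
    rw [edelta_succ]
    congr 1
    · congr 1
      funext i
      simp [Fin.snoc_castSucc]
    · refine Finset.prod_congr rfl fun j _ => ?_
      simp [Fin.snoc_castSucc, Fin.snoc_last]
  -- denominator split
  have hden : edelta p z = edelta p (fun i : Fin n => z i.castSucc) *
      ∏ j : Fin n, (z j.castSucc * theta p (z (Fin.last n) / z j.castSucc)) :=
    edelta_succ p z
  -- nonzeroness of each denominator factor
  have hfac : ∀ j : Fin n,
      z j.castSucc * theta p (z (Fin.last n) / z j.castSucc) ≠ 0 := by
    have h0 : edelta p (fun i : Fin n => z i.castSucc) *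
        ∏ j : Fin n, (z j.castSucc * theta p (z (Fin.last n) / z j.castSucc)) ≠ 0 :=
      hden ▸ hΔz
    intro j
    have hprod := (mul_ne_zero_iff.mp h0).2
    exact Finset.prod_ne_zero_iff.mp hprod j (Finset.mem_univ j)
  have hθ : ∀ j : Fin n, theta p (z (Fin.last n) / z j.castSucc) ≠ 0 :=
    fun j => (mul_ne_zero_iff.mp (hfac j)).2
  -- split the Fin (n+1) product
  have hsplit : ∏ j : Fin (n + 1), 1 / epoch p q (q * z (Fin.last n) / z j) s
      = (∏ j : Fin n, 1 / epoch p q (q * z (Fin.last n) / z j.castSucc) s) *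
        (1 / epoch p q q s) := by
    rw [Fin.prod_univ_castSucc]
    congr 2
    rw [mul_div_assoc, div_self hL0, mul_one]
  rw [hnum, hden, hsplit]
  rw [mul_div_mul_comm]
  -- combine products
  rw [← Finset.prod_div_distrib]
  have hterm : ∀ j : Fin n,
      (z j.castSucc * q ^ y j *
          theta p (z (Fin.last n) * q ^ s / (z j.castSucc * q ^ y j))) /
        (z j.castSucc * theta p (z (Fin.last n) / z j.castSucc)) *
        (1 / epoch p q (q * z (Fin.last n) / z j.castSucc) s)
      = epoch p q (z j.castSucc * q ^ (1 - (s : ℤ)) / z (Fin.last n)) (y j) /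
          (epoch p q (z (Fin.last n) / z j.castSucc) s *
            epoch p q (z j.castSucc * q ^ (-(s : ℤ)) / z (Fin.last n)) (y j)) :=
    fun j => term_identity p q (z j.castSucc) (z (Fin.last n)) hp hq (hz _) hL0 s (y j)
      (hθ j) (hd1 j.castSucc) (hd2 j) (hd3 j)
  have hPP : (∏ j : Fin n,
        (z j.castSucc * q ^ y j *
            theta p (z (Fin.last n) * q ^ s / (z j.castSucc * q ^ y j))) /
          (z j.castSucc * theta p (z (Fin.last n) / z j.castSucc))) *
        (∏ j : Fin n, 1 / epoch p q (q * z (Fin.last n) / z j.castSucc) s)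
      = ∏ j : Fin n,
          epoch p q (z j.castSucc * q ^ (1 - (s : ℤ)) / z (Fin.last n)) (y j) /
            (epoch p q (z (Fin.last n) / z j.castSucc) s *
              epoch p q (z j.castSucc * q ^ (-(s : ℤ)) / z (Fin.last n)) (y j)) := by
    rw [← Finset.prod_mul_distrib]
    exact Finset.prod_congr rfl fun j _ => hterm j
  linear_combination (((edelta p fun i => z i.castSucc * q ^ y i) /
      edelta p fun i => z i.castSucc) * (1 / epoch p q q s)) * hPP
end
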